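/- Fix β > log 4. There exists a critical value K_c^{(1)}(β) > 0 such that: (i) for every 0 < K < K_c^{(1)}(β), E_{β,K} = {ρ_β}; (ii) for K = K_c^{(1)}(β) there exist ν⁺ and ν⁻ in P with ν⁺ ≠ ν⁻, ν⁺ ≠ ρ_β, ν⁻ ≠ ρ_β, and E_{β,K} = {ρ_β, ν⁺, ν⁻}; (iii) for every K > K_c^{(1)}(β) there exist ν⁺ = ν⁺(β,K) and ν⁻ = ν⁻(β,K) with ν⁺ ≠ ν⁻, ν⁺ ≠ ρ_β, ν⁻ ≠ ρ_β, and E_{β,K} = {ν⁺, ν⁻}; and in cases (ii) and (iii) ν⁻ is obtained from ν⁺ by interchanging its components at −1 and at 1 (i.e. ν⁻₋₁ = ν⁺₁, ν⁻₀ = ν⁺₀, ν⁻₁ = ν⁺₋₁). -/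

import Mathlib

noncomputable section

/-- `μ = (μ₋₁, μ₀, μ₁)` is a probability vector on `Λ = {-1,0,1}`. -/
def IsProbVec (μ : ℝ × ℝ × ℝ) : Prop :=
  0 ≤ μ.1 ∧ 0 ≤ μ.2.1 ∧ 0 ≤ μ.2.2 ∧ μ.1 + μ.2.1 + μ.2.2 = 1

/-- Relative entropy `R(μ|ρ)` with respect to the uniform measure `ρ = (1/3,1/3,1/3)`
(the convention `0 · log 0 = 0` holds automatically since `Real.log 0 = 0`). -/
def relEntUnif (μ : ℝ × ℝ × ℝ) : ℝ :=
  μ.1 * Real.log (3 * μ.1) + μ.2.1 * Real.log (3 * μ.2.1) + μ.2.2 * Real.log (3 * μ.2.2)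

/-- `f_K(μ) = (μ₁ + μ₋₁) − K (μ₁ − μ₋₁)²`. -/
def fK (K : ℝ) (μ : ℝ × ℝ × ℝ) : ℝ :=
  (μ.2.2 + μ.1) - K * (μ.2.2 - μ.1) ^ 2

/-- The set `E_{β,K}` of canonical equilibrium macrostates: the minimizers of
`R(μ|ρ) + β f_K(μ)` over probability vectors. -/
def canonE (β K : ℝ) : Set (ℝ × ℝ × ℝ) :=
  {μ | IsProbVec μ ∧ ∀ ν, IsProbVec ν →
    relEntUnif μ + β * fK K μ ≤ relEntUnif ν + β * fK K ν}

/-- The measure `ρ_β` with `ρ_β(±1) = e^{−β}/(1+2e^{−β})` and `ρ_β(0) = 1/(1+2e^{−β})`. -/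
def rhoBeta (β : ℝ) : ℝ × ℝ × ℝ :=
  (Real.exp (-β) / (1 + 2 * Real.exp (-β)),
   1 / (1 + 2 * Real.exp (-β)),
   Real.exp (-β) / (1 + 2 * Real.exp (-β)))

/-- The second-order critical value `K_c^{(2)}(β) = 1/(4βe^{−β}) + 1/(2β)`. -/
def Kc2 (β : ℝ) : ℝ := 1 / (4 * β * Real.exp (-β)) + 1 / (2 * β)

/-!
Let `ν(t)` be the Gibbs measure on `{-1, 0, 1}` proportional to `exp (-β |i| + t i)` and
`w(t) = ν(t)₁ - ν(t)₋₁` its magnetization, an increasing function of `t`. For every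
probability vector `μ` with magnetization `m = μ₁ - μ₋₁`,
`R(μ|ρ) + β f_K(μ) = F_K(t) + (m - w(t)) (t - βK (m + w(t))) + D(μ ‖ ν(t))`,
where `F_K(t)` is the value of the functional at `ν(t)`. At `t = 2βKm` the middle term is
`βK (m - w(t))² ≥ 0`, so `E_{β,K}` is the image under `ν` of the set of global minimizers of
the even function `F_K`.

For `t > 0`, `F_K'(t)` has the sign of `χ(t) - 2βK`, where `χ(t) = t / w(t)`. If
`2e^{-β} < 1/2`, then `χ` decreases up to a turning point `t_h` and increases afterwards, so
on `(0, ∞)` the function `F_K` can only beat `F_K(0)` at its minimizer `γ` over `[t_h, ∞)`.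
The gap `F_K(γ) - F_K(0)` is continuous and strictly decreasing in `K`, positive for small `K`,
negative for large `K`, and `K_c^{(1)}` is its zero.
-/

open Real Set Filter Topology InformationTheory

lemma strictMonoOn_of_hasDerivAt_pos {D : Set ℝ} (hD : Convex ℝ D) {f f' : ℝ → ℝ}
    (hf : ∀ x ∈ D, HasDerivAt f (f' x) x) (hf' : ∀ x ∈ interior D, 0 < f' x) :
    StrictMonoOn f D :=
  strictMonoOn_of_hasDerivWithinAt_pos hD (fun x hx => (hf x hx).continuousAt.continuousWithinAt)
    (fun x hx => (hf x (interior_subset hx)).hasDerivWithinAt) hf'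

lemma strictAntiOn_of_hasDerivAt_neg {D : Set ℝ} (hD : Convex ℝ D) {f f' : ℝ → ℝ}
    (hf : ∀ x ∈ D, HasDerivAt f (f' x) x) (hf' : ∀ x ∈ interior D, f' x < 0) :
    StrictAntiOn f D :=
  strictAntiOn_of_hasDerivWithinAt_neg hD (fun x hx => (hf x hx).continuousAt.continuousWithinAt)
    (fun x hx => (hf x (interior_subset hx)).hasDerivWithinAt) hf'

lemma pos_of_hasDerivAt_pos {f f' : ℝ → ℝ} (hf : ∀ x, HasDerivAt f (f' x) x) (h0 : f 0 = 0)
    (hf' : ∀ x, 0 < x → 0 < f' x) {x : ℝ} (hx : 0 < x) : 0 < f x :=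
  h0 ▸ strictMonoOn_of_hasDerivAt_pos (convex_Ici 0) (fun y _ => hf y)
    (fun y hy => hf' y (by simpa using hy)) self_mem_Ici hx.le hx

namespace Real

lemma sinh_lt_mul_cosh {t : ℝ} (ht : 0 < t) : sinh t < t * cosh t := by
  have h := pos_of_hasDerivAt_pos (f := fun t => t * cosh t - sinh t) (f' := fun t => t * sinh t)
    (fun s => ((hasDerivAt_id' s).mul (hasDerivAt_cosh s) |>.sub (hasDerivAt_sinh s)).congr_deriv
      (by ring))
    (by simp) (fun s hs => mul_pos hs (sinh_pos_iff.2 hs)) ht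
  simpa [sub_pos] using h

lemma three_mul_sinh_mul_cosh_lt {t : ℝ} (ht : 0 < t) :
    3 * (sinh t * cosh t) < t * (1 + 2 * cosh t ^ 2) := by
  have h := pos_of_hasDerivAt_pos
    (f := fun t => t * (1 + 2 * cosh t ^ 2) - 3 * (sinh t * cosh t))
    (f' := fun t => 4 * sinh t * (t * cosh t - sinh t))
    (fun s => ((hasDerivAt_id' s).mul (((hasDerivAt_cosh s).pow 2).const_mul 2 |>.const_add 1)
      |>.sub (((hasDerivAt_sinh s).mul (hasDerivAt_cosh s)).const_mul 3)).congr_deriv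
      (by
        simp only [Pi.pow_apply]; push_cast
        linear_combination (-1 : ℝ) * cosh_sq_sub_sinh_sq s))
    (by simp)
    (fun s hs => mul_pos (mul_pos four_pos (sinh_pos_iff.2 hs)) (sub_pos.2 (sinh_lt_mul_cosh hs)))
    ht
  simpa [sub_pos] using h

lemma two_mul_sinh_sq_lt {t : ℝ} (ht : 0 < t) :
    2 * sinh t ^ 2 < t * (sinh t * cosh t) + t ^ 2 := by
  have h := pos_of_hasDerivAt_pos
    (f := fun t => t * (sinh t * cosh t) - 2 * sinh t ^ 2 + t ^ 2)
    (f' := fun t => t * (1 + 2 * cosh t ^ 2) - 3 * (sinh t * cosh t))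
    (fun s => ((hasDerivAt_id' s).mul ((hasDerivAt_sinh s).mul (hasDerivAt_cosh s))
      |>.sub (((hasDerivAt_sinh s).pow 2).const_mul 2) |>.add (hasDerivAt_pow 2 s)).congr_deriv
      (by
        simp only [Pi.mul_apply]; push_cast
        linear_combination (-s) * cosh_sq_sub_sinh_sq s))
    (by simp) (fun s hs => sub_pos.2 (three_mul_sinh_mul_cosh_lt hs)) ht
  linarith

end Real

lemma mul_log_mul_eq_klFun {a c : ℝ} (ha : a ≠ 0) (hc : c ≠ 0) (x : ℝ) :
    x * log (c * x) = a * klFun (x / a) + (x - a) + x * log (c * a) := by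
  rcases eq_or_ne x 0 with rfl | hx
  · simp [klFun_zero]
  rw [klFun, show c * x = x / a * (c * a) by field_simp, log_mul (by positivity) (by positivity)]
  field_simp
  ring

def klDivTriple (p q : ℝ × ℝ × ℝ) : ℝ :=
  q.1 * klFun (p.1 / q.1) + q.2.1 * klFun (p.2.1 / q.2.1) + q.2.2 * klFun (p.2.2 / q.2.2)

section KLDivTriple

variable {p q : ℝ × ℝ × ℝ}

lemma klDivTriple_nonneg (hp : 0 ≤ p) (hq : 0 ≤ q) : 0 ≤ klDivTriple p q := by
  obtain ⟨hp1, hp2, hp3⟩ := hp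
  obtain ⟨hq1, hq2, hq3⟩ := hq
  exact add_nonneg (add_nonneg (mul_nonneg hq1 (klFun_nonneg (div_nonneg hp1 hq1)))
    (mul_nonneg hq2 (klFun_nonneg (div_nonneg hp2 hq2))))
    (mul_nonneg hq3 (klFun_nonneg (div_nonneg hp3 hq3)))

lemma eq_of_klDivTriple_eq_zero (hp : 0 ≤ p) (hq : 0 < q.1 ∧ 0 < q.2.1 ∧ 0 < q.2.2)
    (h : klDivTriple p q = 0) : p = q := by
  obtain ⟨hp1, hp2, hp3⟩ := hp
  obtain ⟨hq1, hq2, hq3⟩ := hq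
  have h1 := mul_nonneg hq1.le (klFun_nonneg (div_nonneg hp1 hq1.le))
  have h2 := mul_nonneg hq2.le (klFun_nonneg (div_nonneg hp2 hq2.le))
  have h3 := mul_nonneg hq3.le (klFun_nonneg (div_nonneg hp3 hq3.le))
  have coord : ∀ {x a : ℝ}, 0 ≤ x → 0 < a → a * klFun (x / a) = 0 → x = a :=
    fun hx ha hxa => (div_eq_one_iff_eq ha.ne').1 <| (klFun_eq_zero_iff (div_nonneg hx ha.le)).1 <|
      (mul_eq_zero.1 hxa).resolve_left ha.ne'
  unfold klDivTriple at h
  ext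
  · exact coord hp1 hq1 (by linarith)
  · exact coord hp2 hq2 (by linarith)
  · exact coord hp3 hq3 (by linarith)

end KLDivTriple

lemma IsProbVec.nonneg {p : ℝ × ℝ × ℝ} (hp : IsProbVec p) : 0 ≤ p :=
  ⟨hp.1, hp.2.1, hp.2.2.1⟩

section EvenMinimizers

variable {f : ℝ → ℝ} (heven : ∀ t, f (-t) = f t) {γ : ℝ} (hγ : 0 < γ)
  (hlt : ∀ t, 0 < t → t ≠ γ → min (f 0) (f γ) < f t)

include heven hγ hlt

lemma forall_le_iff_of_even (t : ℝ) :
    (∀ s, f t ≤ f s) ↔ t = 0 ∧ f 0 ≤ f γ ∨ (t = γ ∨ t = -γ) ∧ f γ ≤ f 0 := by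
  have habs : ∀ s, f |s| = f s := fun s => by
    rcases abs_choice s with h | h <;> rw [h]; exact heven s
  have hcases : ∀ s, |s| = 0 ∨ |s| = γ ∨ min (f 0) (f γ) < f s := fun s => by
    rcases (abs_nonneg s).eq_or_lt with h | h
    · exact Or.inl h.symm
    rcases eq_or_ne |s| γ with h' | h'
    · exact Or.inr (Or.inl h')
    · exact Or.inr (Or.inr (habs s ▸ hlt _ h h'))
  have hge : ∀ s, min (f 0) (f γ) ≤ f s := fun s => by
    rcases hcases s with h | h | h
    · rw [← habs s, h]; exact min_le_left _ _
    · rw [← habs s, h]; exact min_le_right _ _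
    · exact h.le
  constructor
  · intro h
    rcases hcases t with h0 | hγt | hlt'
    · exact Or.inl ⟨abs_eq_zero.1 h0, abs_eq_zero.1 h0 ▸ h γ⟩
    · exact Or.inr ⟨(abs_eq hγ.le).1 hγt, hγt ▸ habs t ▸ h 0⟩
    · exact absurd (le_min (h 0) (h γ)) hlt'.not_ge
  · rintro (⟨rfl, h⟩ | ⟨ht, h⟩) s
    · exact min_eq_left h ▸ hge s
    · rw [← habs, (abs_eq hγ.le).2 ht]; exact min_eq_right h ▸ hge s

lemma setOf_forall_le_of_even_of_lt (h : f 0 < f γ) : {t | ∀ s, f t ≤ f s} = {0} := by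
  ext t
  simp [forall_le_iff_of_even heven hγ hlt, h.le, h.not_ge]

lemma setOf_forall_le_of_even_of_eq (h : f 0 = f γ) :
    {t | ∀ s, f t ≤ f s} = {0, γ, -γ} := by
  ext t
  simp [forall_le_iff_of_even heven hγ hlt, h.le, h.ge]

lemma setOf_forall_le_of_even_of_gt (h : f γ < f 0) : {t | ∀ s, f t ≤ f s} = {γ, -γ} := by
  ext t
  simp [forall_le_iff_of_even heven hγ hlt, h.le, h.not_ge]

end EvenMinimizers

/-- `chi e` (below) decreases where `hypRatio < 1 / e` and increases where `hypRatio > 1 / e`. -/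
def hypRatio (t : ℝ) : ℝ := (sinh t * cosh t - t) / (t * cosh t - sinh t)

lemma hasDerivAt_hypRatio {t : ℝ} (ht : 0 < t) :
    HasDerivAt hypRatio (sinh t * (t * (sinh t * cosh t) - 2 * sinh t ^ 2 + t ^ 2) /
      (t * cosh t - sinh t) ^ 2) t := by
  refine (((hasDerivAt_sinh t).mul (hasDerivAt_cosh t)).sub (hasDerivAt_id' t)).div
    (((hasDerivAt_id' t).mul (hasDerivAt_cosh t)).sub (hasDerivAt_sinh t))
    (sub_pos.2 (sinh_lt_mul_cosh ht)).ne' |>.congr_deriv ?_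
  simp only [Pi.mul_apply, Pi.sub_apply]
  congr 1
  linear_combination (t * cosh t - sinh t) * cosh_sq_sub_sinh_sq t

lemma hypRatio_strictMonoOn : StrictMonoOn hypRatio (Ioi 0) :=
  strictMonoOn_of_hasDerivAt_pos (convex_Ioi 0) (fun t ht => hasDerivAt_hypRatio ht)
    fun t ht => by
      rw [interior_Ioi] at ht
      exact div_pos (mul_pos (sinh_pos_iff.2 ht) (by linarith [two_mul_sinh_sq_lt ht]))
        (pow_pos (sub_pos.2 (sinh_lt_mul_cosh ht)) 2)

lemma hypRatio_lt_two_mul_cosh {t : ℝ} (ht : 0 < t) : hypRatio t < 2 * cosh t := by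
  rw [hypRatio, div_lt_iff₀ (sub_pos.2 (sinh_lt_mul_cosh ht))]
  nlinarith [three_mul_sinh_mul_cosh_lt ht]

lemma lt_hypRatio_four_mul_add_two {M : ℝ} (hM : 0 < M) : M < hypRatio (4 * M + 2) := by
  set t := 4 * M + 2
  have ht : 0 < t := by positivity
  -- `sinh t ≥ (t + t ^ 2 / 2) / 2`, which is `(M + 1) t` for this `t`
  have hsinh : (M + 1) * t ≤ sinh t := by
    rw [sinh_eq]
    nlinarith [quadratic_le_exp_of_nonneg ht.le, exp_le_one_iff.2 (neg_nonpos.2 ht.le)]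
  rw [hypRatio, lt_div_iff₀ (sub_pos.2 (sinh_lt_mul_cosh ht))]
  nlinarith [one_le_cosh t, sinh_pos_iff.2 ht, mul_le_mul_of_nonneg_left hsinh (cosh_pos t).le]

lemma exists_hypRatio_eq {M : ℝ} (hM : 2 < M) : ∃ t, 0 < t ∧ hypRatio t = M := by
  have hsmall : ∀ᶠ t in 𝓝[>] (0 : ℝ), cosh t < M / 2 :=
    nhdsWithin_le_nhds <| (continuous_cosh.tendsto' 0 1 cosh_zero).eventually
      (gt_mem_nhds (by linarith))
  obtain ⟨t₀, hcosh, ht₀ : 0 < t₀⟩ := (hsmall.and self_mem_nhdsWithin).exists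
  have h₀ : hypRatio t₀ < M := by linarith [hypRatio_lt_two_mul_cosh ht₀]
  have h₁ := lt_hypRatio_four_mul_add_two (zero_lt_two.trans hM)
  have ht₀₁ : t₀ < 4 * M + 2 := (hypRatio_strictMonoOn.lt_iff_lt ht₀
    (show (0 : ℝ) < 4 * M + 2 by linarith)).1 (h₀.trans h₁)
  obtain ⟨t, ⟨ht, -⟩, hMt⟩ := intermediate_value_Icc ht₀₁.le
    (fun t ht => (hasDerivAt_hypRatio (ht₀.trans_le ht.1)).continuousAt.continuousWithinAt)
    ⟨h₀.le, h₁.le⟩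
  exact ⟨t, ht₀.trans_le ht, hMt⟩

structure IsTurningPoint (f : ℝ → ℝ) (th : ℝ) : Prop where
  pos : 0 < th
  strictAntiOn : StrictAntiOn f (Ioc 0 th)
  strictMonoOn : StrictMonoOn f (Ici th)

def magnetization (e t : ℝ) : ℝ := e * sinh t / (1 + e * cosh t)

def chi (e t : ℝ) : ℝ := t / magnetization e t

section Magnetization

variable {e : ℝ}

lemma one_add_mul_cosh_pos (he : 0 ≤ e) (t : ℝ) : 0 < 1 + e * cosh t := by
  have := cosh_pos t
  positivity

lemma hasDerivAt_magnetization (he : 0 ≤ e) (t : ℝ) :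
    HasDerivAt (magnetization e) (e * (cosh t + e) / (1 + e * cosh t) ^ 2) t := by
  refine ((hasDerivAt_sinh t).const_mul e).div (((hasDerivAt_cosh t).const_mul e).const_add 1)
    (one_add_mul_cosh_pos he t).ne' |>.congr_deriv ?_
  congr 1
  linear_combination (e * e) * cosh_sq_sub_sinh_sq t

lemma magnetization_strictMono (he : 0 < e) : StrictMono (magnetization e) :=
  strictMono_of_hasDerivAt_pos (hasDerivAt_magnetization he.le) fun t =>
    have := one_add_mul_cosh_pos he.le t
    have := cosh_pos t
    by positivity

@[simp] lemma magnetization_zero : magnetization e 0 = 0 := by simp [magnetization]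

lemma magnetization_neg (t : ℝ) : magnetization e (-t) = -magnetization e t := by
  simp [magnetization, neg_div]

lemma magnetization_pos (he : 0 < e) {t : ℝ} (ht : 0 < t) : 0 < magnetization e t :=
  magnetization_zero (e := e) ▸ magnetization_strictMono he ht

lemma abs_magnetization_lt_one (he : 0 ≤ e) (t : ℝ) : |magnetization e t| < 1 := by
  have hsinh : |sinh t| < cosh t := by rw [abs_sinh, ← cosh_abs]; exact sinh_lt_cosh _
  rw [magnetization, abs_div, abs_mul, abs_of_nonneg he,
    abs_of_pos (one_add_mul_cosh_pos he t), div_lt_one (one_add_mul_cosh_pos he t)]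
  nlinarith [mul_le_mul_of_nonneg_left hsinh.le he]

lemma lt_chi (he : 0 < e) {t : ℝ} (ht : 0 < t) : t < chi e t := by
  have hw := magnetization_pos he ht
  rw [chi, lt_div_iff₀ hw]
  nlinarith [(abs_lt.1 (abs_magnetization_lt_one he.le t)).2]

lemma hasDerivAt_chi (he : 0 < e) {t : ℝ} (ht : 0 < t) :
    HasDerivAt (chi e) ((hypRatio t - 1 / e) *
      (e ^ 2 * (t * cosh t - sinh t) / ((1 + e * cosh t) ^ 2 * magnetization e t ^ 2))) t := by
  have hZ := one_add_mul_cosh_pos he.le t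
  have hw := (magnetization_pos he ht).ne'
  have hD := (sub_pos.2 (sinh_lt_mul_cosh ht)).ne'
  refine (hasDerivAt_id' t).div (hasDerivAt_magnetization he.le t) hw |>.congr_deriv ?_
  rw [magnetization] at hw ⊢
  rw [hypRatio]
  generalize hDdef : t * cosh t - sinh t = D at hD ⊢
  field_simp
  subst hDdef
  ring

lemma exists_isTurningPoint_chi (he : 0 < e) (he2 : e < 1 / 2) :
    ∃ th, IsTurningPoint (chi e) th := by
  obtain ⟨th, hth, hMth⟩ := exists_hypRatio_eq (M := 1 / e) (by rw [lt_div_iff₀ he]; linarith)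
  have hfactor : ∀ t, 0 < t →
      0 < e ^ 2 * (t * cosh t - sinh t) / ((1 + e * cosh t) ^ 2 * magnetization e t ^ 2) :=
    fun t ht =>
      have := sub_pos.2 (sinh_lt_mul_cosh ht)
      have := magnetization_pos he ht
      have := one_add_mul_cosh_pos he.le t
      by positivity
  refine ⟨th, hth, strictAntiOn_of_hasDerivAt_neg (convex_Ioc 0 th)
    (fun t ht => hasDerivAt_chi he ht.1) fun t ht => ?_,
    strictMonoOn_of_hasDerivAt_pos (convex_Ici th)
    (fun t ht => hasDerivAt_chi he (hth.trans_le ht)) fun t ht => ?_⟩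
  · rw [interior_Ioc] at ht
    exact mul_neg_of_neg_of_pos (sub_neg.2 (hMth ▸ hypRatio_strictMonoOn ht.1 hth ht.2))
      (hfactor t ht.1)
  · rw [interior_Ici] at ht
    exact mul_pos (sub_pos.2 (hMth ▸ hypRatio_strictMonoOn hth (hth.trans ht) ht))
      (hfactor t (hth.trans ht))

end Magnetization

def eps (β : ℝ) : ℝ := 2 * exp (-β)

/-- The measure `ν(t)`, proportional to `exp (-β |i| + t i)` at `i = -1, 0, 1`. -/
def tilt (β t : ℝ) : ℝ × ℝ × ℝ :=
  (exp (-β - t) / (1 + eps β * cosh t), 1 / (1 + eps β * cosh t),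
    exp (-β + t) / (1 + eps β * cosh t))

def freeEnergy (β K : ℝ) (p : ℝ × ℝ × ℝ) : ℝ := relEntUnif p + β * fK K p

/-- `F_K(t)`, the free energy of `ν(t)` (`freeEnergy_tilt`). -/
def curveEnergy (β K t : ℝ) : ℝ :=
  log 3 - log (1 + eps β * cosh t) + t * magnetization (eps β) t
    - β * K * magnetization (eps β) t ^ 2

section Tilt

variable {β K : ℝ}

lemma eps_pos (β : ℝ) : 0 < eps β := by
  unfold eps
  positivity

lemma eps_lt_half (hβ : log 4 < β) : eps β < 1 / 2 := by
  have : exp (-β) < exp (-log 4) := exp_lt_exp.2 (by linarith)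
  rw [exp_neg (log 4), exp_log (by norm_num)] at this
  rw [eps]
  linarith

lemma one_add_eps_mul_cosh (β t : ℝ) :
    1 + eps β * cosh t = exp (-β - t) + 1 + exp (-β + t) := by
  rw [eps, cosh_eq, sub_eq_add_neg, exp_add, exp_add]
  ring

lemma tilt_pos (β t : ℝ) :
    0 < (tilt β t).1 ∧ 0 < (tilt β t).2.1 ∧ 0 < (tilt β t).2.2 := by
  have := one_add_mul_cosh_pos (eps_pos β).le t
  refine ⟨?_, ?_, ?_⟩ <;> simp only [tilt] <;> positivity

lemma tilt_nonneg (β t : ℝ) : 0 ≤ tilt β t :=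
  ⟨(tilt_pos β t).1.le, (tilt_pos β t).2.1.le, (tilt_pos β t).2.2.le⟩

lemma tilt_sum (β t : ℝ) : (tilt β t).1 + (tilt β t).2.1 + (tilt β t).2.2 = 1 := by
  have := (one_add_mul_cosh_pos (eps_pos β).le t).ne'
  simp only [tilt]
  field_simp
  rw [one_add_eps_mul_cosh]

lemma isProbVec_tilt (β t : ℝ) : IsProbVec (tilt β t) :=
  ⟨(tilt_nonneg β t).1, (tilt_nonneg β t).2.1, (tilt_nonneg β t).2.2, tilt_sum β t⟩

lemma tilt_magnetization (β t : ℝ) :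
    (tilt β t).2.2 - (tilt β t).1 = magnetization (eps β) t := by
  simp only [tilt, magnetization, eps, sinh_eq, sub_eq_add_neg, exp_add]
  ring

lemma tilt_zero (β : ℝ) : tilt β 0 = rhoBeta β := by
  simp [tilt, rhoBeta, eps]

lemma tilt_neg (β t : ℝ) : tilt β (-t) = ((tilt β t).2.2, (tilt β t).2.1, (tilt β t).1) := by
  simp [tilt, sub_eq_add_neg]

lemma tilt_injective (β : ℝ) : Function.Injective (tilt β) := fun s t h =>
  (magnetization_strictMono (eps_pos β)).injective <| by
    rw [← tilt_magnetization, h, tilt_magnetization]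

lemma tilt_ne_of_pos (β : ℝ) {γ : ℝ} (hγ : 0 < γ) :
    tilt β γ ≠ tilt β (-γ) ∧ tilt β γ ≠ rhoBeta β ∧
      tilt β (-γ) ≠ rhoBeta β := by
  rw [← tilt_zero β]
  exact ⟨(tilt_injective β).ne (by linarith), (tilt_injective β).ne hγ.ne',
    (tilt_injective β).ne (by linarith)⟩

lemma log_three_mul_tilt (β t : ℝ) :
    log (3 * (tilt β t).1) = log 3 - log (1 + eps β * cosh t) - β - t ∧
    log (3 * (tilt β t).2.1) = log 3 - log (1 + eps β * cosh t) ∧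
    log (3 * (tilt β t).2.2) = log 3 - log (1 + eps β * cosh t) - β + t := by
  have hZ := (one_add_mul_cosh_pos (eps_pos β).le t).ne'
  simp only [tilt, mul_div_assoc', mul_one]
  refine ⟨?_, ?_, ?_⟩ <;>
    rw [log_div (by positivity) hZ] <;> try rw [log_mul (by norm_num) (exp_ne_zero _), log_exp]
  all_goals ring

lemma freeEnergy_eq_tilt {p : ℝ × ℝ × ℝ} (hp : p.1 + p.2.1 + p.2.2 = 1) (K t : ℝ) :
    freeEnergy β K p = curveEnergy β K t
      + (p.2.2 - p.1 - magnetization (eps β) t)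
        * (t - β * K * (p.2.2 - p.1 + magnetization (eps β) t))
      + klDivTriple p (tilt β t) := by
  obtain ⟨h1, h2, h3⟩ := tilt_pos β t
  obtain ⟨l1, l2, l3⟩ := log_three_mul_tilt β t
  have e1 := mul_log_mul_eq_klFun h1.ne' three_ne_zero p.1
  have e2 := mul_log_mul_eq_klFun h2.ne' three_ne_zero p.2.1
  have e3 := mul_log_mul_eq_klFun h3.ne' three_ne_zero p.2.2
  rw [l1] at e1
  rw [l2] at e2
  rw [l3] at e3
  simp only [freeEnergy, relEntUnif, fK, curveEnergy, klDivTriple]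
  rw [← tilt_magnetization]
  linear_combination e1 + e2 + e3 + (log 3 - log (1 + eps β * cosh t) + 1) * hp - tilt_sum β t

lemma freeEnergy_tilt (K t : ℝ) : freeEnergy β K (tilt β t) = curveEnergy β K t := by
  obtain ⟨h1, h2, h3⟩ := tilt_pos β t
  rw [freeEnergy_eq_tilt (tilt_sum β t), tilt_magnetization, klDivTriple, div_self h1.ne',
    div_self h2.ne', div_self h3.ne', klFun_one]
  ring

lemma curveEnergy_add_klDivTriple_le_freeEnergy (hβK : 0 ≤ β * K) {p : ℝ × ℝ × ℝ}
    (hp : p.1 + p.2.1 + p.2.2 = 1) :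
    curveEnergy β K (2 * β * K * (p.2.2 - p.1))
      + klDivTriple p (tilt β (2 * β * K * (p.2.2 - p.1))) ≤ freeEnergy β K p := by
  rw [freeEnergy_eq_tilt hp K (2 * β * K * (p.2.2 - p.1))]
  nlinarith [mul_nonneg hβK
    (sq_nonneg (p.2.2 - p.1 - magnetization (eps β) (2 * β * K * (p.2.2 - p.1))))]

lemma curveEnergy_neg (K t : ℝ) : curveEnergy β K (-t) = curveEnergy β K t := by
  simp [curveEnergy, magnetization_neg]

end Tilt

theorem canonE_eq_image_tilt {β K : ℝ} (hβK : 0 ≤ β * K) :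
    canonE β K = tilt β '' {t | ∀ s, curveEnergy β K t ≤ curveEnergy β K s} := by
  have hlow : ∀ p, IsProbVec p → curveEnergy β K (2 * β * K * (p.2.2 - p.1))
      + klDivTriple p (tilt β (2 * β * K * (p.2.2 - p.1))) ≤ freeEnergy β K p :=
    fun p hp => curveEnergy_add_klDivTriple_le_freeEnergy hβK hp.2.2.2
  have hkl : ∀ p, IsProbVec p → ∀ t, 0 ≤ klDivTriple p (tilt β t) :=
    fun p hp t => klDivTriple_nonneg hp.nonneg (tilt_nonneg β t)
  ext p
  constructor
  · rintro ⟨hp, hmin⟩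
    have hup : ∀ t, freeEnergy β K p ≤ curveEnergy β K t := fun t =>
      freeEnergy_tilt K t ▸ hmin _ (isProbVec_tilt β t)
    have := hlow p hp
    have := hkl p hp (2 * β * K * (p.2.2 - p.1))
    refine ⟨2 * β * K * (p.2.2 - p.1), fun t => by linarith [hup t], ?_⟩
    exact (eq_of_klDivTriple_eq_zero hp.nonneg (tilt_pos β _)
      (by linarith [hup (2 * β * K * (p.2.2 - p.1))])).symm
  · rintro ⟨t, ht, rfl⟩
    refine ⟨isProbVec_tilt β t, fun q hq => ?_⟩
    change freeEnergy β K (tilt β t) ≤ freeEnergy β K q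
    rw [freeEnergy_tilt]
    linarith [ht (2 * β * K * (q.2.2 - q.1)), hlow q hq, hkl q hq (2 * β * K * (q.2.2 - q.1))]

section CurveEnergy

variable {β K th : ℝ}

lemma hasDerivAt_curveEnergy (t : ℝ) :
    HasDerivAt (curveEnergy β K) (eps β * (cosh t + eps β) / (1 + eps β * cosh t) ^ 2 *
      (t - 2 * β * K * magnetization (eps β) t)) t := by
  have he := (eps_pos β).le
  have hlog := ((hasDerivAt_cosh t).const_mul (eps β)).const_add 1 |>.log
    (one_add_mul_cosh_pos he t).ne'
  have hw := hasDerivAt_magnetization he t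
  refine ((hlog.const_sub (log 3)).add ((hasDerivAt_id' t).mul hw)).sub
    ((hw.pow 2).const_mul (β * K)) |>.congr_deriv ?_
  simp only [magnetization, Nat.cast_ofNat]
  ring

lemma curveEnergy_eq_add (K' t : ℝ) :
    curveEnergy β K' t = curveEnergy β K t + β * (K - K') * magnetization (eps β) t ^ 2 := by
  simp only [curveEnergy]
  ring

lemma sub_two_mul_magnetization {t : ℝ} (ht : 0 < t) :
    t - 2 * β * K * magnetization (eps β) t =
      magnetization (eps β) t * (chi (eps β) t - 2 * β * K) := by
  rw [chi, mul_sub, mul_div_cancel₀ _ (magnetization_pos (eps_pos β) ht).ne']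
  ring

lemma curveEnergy_strictMonoOn {D : Set ℝ} (hD : Convex ℝ D) (hD0 : D ⊆ Ici 0)
    (h : ∀ s ∈ interior D, 2 * β * K < chi (eps β) s) :
    StrictMonoOn (curveEnergy β K) D := by
  refine strictMonoOn_of_hasDerivAt_pos hD (fun t _ => hasDerivAt_curveEnergy t) fun t ht => ?_
  have ht0 : 0 < t := by simpa using interior_mono hD0 ht
  have := one_add_mul_cosh_pos (eps_pos β).le t
  have := magnetization_pos (eps_pos β) ht0
  have := cosh_pos t
  have := eps_pos β
  have := sub_pos.2 (h t ht)
  rw [sub_two_mul_magnetization ht0]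
  positivity

lemma curveEnergy_strictAntiOn {D : Set ℝ} (hD : Convex ℝ D) (hD0 : D ⊆ Ici 0)
    (h : ∀ s ∈ interior D, chi (eps β) s < 2 * β * K) :
    StrictAntiOn (curveEnergy β K) D := by
  refine strictAntiOn_of_hasDerivAt_neg hD (fun t _ => hasDerivAt_curveEnergy t) fun t ht => ?_
  have ht0 : 0 < t := by simpa using interior_mono hD0 ht
  have := one_add_mul_cosh_pos (eps_pos β).le t
  have := cosh_pos t
  have := eps_pos β
  rw [sub_two_mul_magnetization ht0]
  exact mul_neg_of_pos_of_neg (by positivity)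
    (mul_neg_of_pos_of_neg (magnetization_pos (eps_pos β) ht0) (sub_neg.2 (h t ht)))

lemma min_lt_curveEnergy_of_mem_Ioo (hanti : StrictAntiOn (chi (eps β)) (Ioc 0 th)) {t : ℝ}
    (ht : t ∈ Ioo 0 th) :
    min (curveEnergy β K 0) (curveEnergy β K th) < curveEnergy β K t := by
  obtain ⟨ht0, htth⟩ := ht
  rcases le_or_gt (2 * β * K) (chi (eps β) t) with hc | hc
  · refine min_lt_of_left_lt <| curveEnergy_strictMonoOn (convex_Icc 0 t) Icc_subset_Ici_self
      (fun s hs => ?_) (left_mem_Icc.2 ht0.le) (right_mem_Icc.2 ht0.le) ht0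
    rw [interior_Icc] at hs
    exact hc.trans_lt (hanti ⟨hs.1, (hs.2.trans htth).le⟩ ⟨ht0, htth.le⟩ hs.2)
  · refine min_lt_of_right_lt <| curveEnergy_strictAntiOn (convex_Icc t th)
      ((Icc_subset_Ici_iff htth.le).2 ht0.le)
      (fun s hs => ?_) (left_mem_Icc.2 htth.le) (right_mem_Icc.2 htth.le) htth
    rw [interior_Icc] at hs
    exact (hanti ⟨ht0, htth.le⟩ ⟨ht0.trans hs.1, hs.2.le⟩ hs.1).trans hc

lemma curveEnergy_strictMonoOn_Ici_zero (hth : IsTurningPoint (chi (eps β)) th)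
    (hc : 2 * β * K ≤ chi (eps β) th) : StrictMonoOn (curveEnergy β K) (Ici 0) := by
  rw [← Icc_union_Ici_eq_Ici hth.pos.le]
  refine StrictMonoOn.union (c := th) ?_ ?_ (isGreatest_Icc hth.pos.le) isLeast_Ici
  · refine curveEnergy_strictMonoOn (convex_Icc 0 th) Icc_subset_Ici_self fun s hs => ?_
    rw [interior_Icc] at hs
    exact hc.trans_lt (hth.strictAntiOn ⟨hs.1, hs.2.le⟩ ⟨hth.pos, le_rfl⟩ hs.2)
  · refine curveEnergy_strictMonoOn (convex_Ici th) (Ici_subset_Ici.2 hth.pos.le) fun s hs => ?_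
    rw [interior_Ici] at hs
    exact hc.trans_lt (hth.strictMonoOn self_mem_Ici (mem_Ici.2 hs.le) hs)

lemma exists_strict_min_curveEnergy_Ici (hth : 0 < th)
    (hmono : StrictMonoOn (chi (eps β)) (Ici th)) (K : ℝ) :
    ∃ γ, th ≤ γ ∧ ∀ t, th ≤ t → t ≠ γ →
      curveEnergy β K γ < curveEnergy β K t := by
  rcases le_or_gt (2 * β * K) (chi (eps β) th) with hc | hc
  · refine ⟨th, le_rfl, fun t ht hne => ?_⟩
    refine curveEnergy_strictMonoOn (convex_Icc th t) ((Icc_subset_Ici_iff ht).2 hth.le)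
      (fun s hs => ?_) (left_mem_Icc.2 ht) (right_mem_Icc.2 ht) (ht.lt_of_ne hne.symm)
    rw [interior_Icc] at hs
    exact hc.trans_lt (hmono self_mem_Ici (mem_Ici.2 hs.1.le) hs.1)
  set T := max (th + 1) (2 * β * K)
  have hT : th < T := (lt_add_one th).trans_le (le_max_left _ _)
  have hcT : 2 * β * K < chi (eps β) T :=
    (le_max_right _ _).trans_lt (lt_chi (eps_pos β) (hth.trans hT))
  obtain ⟨γ, hγ, hχγ⟩ := intermediate_value_Icc hT.le
    (fun t ht => (hasDerivAt_chi (eps_pos β) (hth.trans_le ht.1)).continuousAt.continuousWithinAt)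
    ⟨hc.le, hcT.le⟩
  have hthγ : th < γ := hγ.1.lt_of_ne (by rintro rfl; exact hc.ne hχγ)
  refine ⟨γ, hthγ.le, fun t ht hne => ?_⟩
  rcases hne.lt_or_gt with hlt | hgt
  · refine curveEnergy_strictAntiOn (convex_Icc t γ)
      ((Icc_subset_Ici_iff hlt.le).2 (hth.le.trans ht)) (fun s hs => ?_)
      (left_mem_Icc.2 hlt.le) (right_mem_Icc.2 hlt.le) hlt
    rw [interior_Icc] at hs
    exact hχγ ▸ hmono (mem_Ici.2 (ht.trans hs.1.le)) (mem_Ici.2 hthγ.le) hs.2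
  · refine curveEnergy_strictMonoOn (convex_Icc γ t)
      ((Icc_subset_Ici_iff hgt.le).2 (hth.trans hthγ).le) (fun s hs => ?_)
      (left_mem_Icc.2 hgt.le) (right_mem_Icc.2 hgt.le) hgt
    rw [interior_Icc] at hs
    exact hχγ ▸ hmono (mem_Ici.2 hthγ.le) (mem_Ici.2 (hthγ.le.trans hs.1.le)) hs.1

lemma exists_isMinOn_curveEnergy_Ici (hth : IsTurningPoint (chi (eps β)) th) (K : ℝ) :
    ∃ γ, th ≤ γ ∧ IsMinOn (curveEnergy β K) (Ici th) γ ∧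
      ∀ t, 0 < t → t ≠ γ →
        min (curveEnergy β K 0) (curveEnergy β K γ) < curveEnergy β K t := by
  obtain ⟨γ, hγ, hlt⟩ := exists_strict_min_curveEnergy_Ici hth.pos hth.strictMonoOn K
  have hmin : IsMinOn (curveEnergy β K) (Ici th) γ := isMinOn_iff.2 fun t ht => by
    rcases eq_or_ne t γ with rfl | hne
    · exact le_rfl
    · exact (hlt t ht hne).le
  refine ⟨γ, hγ, hmin, fun t ht hne => ?_⟩
  rcases lt_or_ge t th with htth | htth
  · exact (min_le_min_left _ (isMinOn_iff.1 hmin th self_mem_Ici)).trans_lt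
      (min_lt_curveEnergy_of_mem_Ioo hth.strictAntiOn ⟨ht, htth⟩)
  · exact min_lt_of_right_lt (hlt t htth hne)

end CurveEnergy

def tailGap (β th K : ℝ) : ℝ := (⨅ t : Ici th, curveEnergy β K t) - curveEnergy β K 0

section TailGap

variable {β K th : ℝ}

lemma tailGap_eq {γ : ℝ} (hγ : th ≤ γ) (hmin : IsMinOn (curveEnergy β K) (Ici th) γ) :
    tailGap β th K = curveEnergy β K γ - curveEnergy β K 0 := by
  rw [tailGap]
  exact congrArg (· - curveEnergy β K 0) (hmin.iInf_eq hγ)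

lemma tailGap_le_sub (hth : IsTurningPoint (chi (eps β)) th) {t : ℝ} (ht : th ≤ t) :
    tailGap β th K ≤ curveEnergy β K t - curveEnergy β K 0 := by
  obtain ⟨γ, hγ, hmin, -⟩ := exists_isMinOn_curveEnergy_Ici hth K
  rw [tailGap_eq hγ hmin]
  linarith [isMinOn_iff.1 hmin t ht]

lemma exists_tailGap_le (hth : IsTurningPoint (chi (eps β)) th) (K K' : ℝ) :
    ∃ γ, th ≤ γ ∧
      tailGap β th K' ≤ tailGap β th K + β * (K - K') * magnetization (eps β) γ ^ 2 := by
  obtain ⟨γ, hγ, hmin, -⟩ := exists_isMinOn_curveEnergy_Ici hth K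
  refine ⟨γ, hγ, ?_⟩
  rw [tailGap_eq hγ hmin]
  have := tailGap_le_sub hth (K := K') hγ
  rw [curveEnergy_eq_add (K := K) K' γ, curveEnergy_eq_add (K := K) K' 0,
    magnetization_zero] at this
  linarith

lemma tailGap_strictAnti (hβ : 0 < β) (hth : IsTurningPoint (chi (eps β)) th) :
    StrictAnti (tailGap β th) := fun K K' hK => by
  obtain ⟨γ, hγ, hle⟩ := exists_tailGap_le hth K K'
  have := mul_pos (mul_pos hβ (sub_pos.2 hK))
    (pow_pos (magnetization_pos (eps_pos β) (hth.pos.trans_le hγ)) 2)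
  linarith

lemma tailGap_lipschitzWith (hβ : 0 ≤ β) (hth : IsTurningPoint (chi (eps β)) th) :
    LipschitzWith β.toNNReal (tailGap β th) := by
  have key : ∀ K K', tailGap β th K' ≤ tailGap β th K + β * |K - K'| := fun K K' => by
    obtain ⟨γ, -, hle⟩ := exists_tailGap_le hth K K'
    have hw : magnetization (eps β) γ ^ 2 ≤ 1 := by
      rw [sq_le_one_iff_abs_le_one]; exact (abs_magnetization_lt_one (eps_pos β).le γ).le
    calc tailGap β th K' ≤ tailGap β th K + β * (K - K') * magnetization (eps β) γ ^ 2 := hle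
      _ ≤ tailGap β th K + β * |K - K'| * magnetization (eps β) γ ^ 2 := by
        gcongr; exact le_abs_self _
      _ ≤ tailGap β th K + β * |K - K'| := by
        linarith [mul_le_of_le_one_right (mul_nonneg hβ (abs_nonneg (K - K'))) hw]
  refine LipschitzWith.of_dist_le_mul fun K K' => ?_
  rw [Real.dist_eq, Real.dist_eq, Real.coe_toNNReal _ hβ, abs_sub_le_iff]
  constructor
  · linarith [abs_sub_comm K K' ▸ key K' K]
  · linarith [key K K']

lemma exists_tailGap_eq_zero (hβ : 0 < β) (hth : IsTurningPoint (chi (eps β)) th) :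
    ∃ Kc, 0 < Kc ∧ tailGap β th Kc = 0 := by
  set K₀ := chi (eps β) th / (2 * β)
  have hK₀ : 0 < K₀ := div_pos (hth.pos.trans (lt_chi (eps_pos β) hth.pos)) (by positivity)
  have hpos : 0 < tailGap β th K₀ := by
    obtain ⟨γ, hγ, hmin, -⟩ := exists_isMinOn_curveEnergy_Ici hth K₀
    have hc : 2 * β * K₀ ≤ chi (eps β) th := by rw [mul_div_cancel₀ _ (by positivity)]
    rw [tailGap_eq hγ hmin, sub_pos]
    exact curveEnergy_strictMonoOn_Ici_zero hth hc self_mem_Ici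
      (mem_Ici.2 (hth.pos.le.trans hγ)) (hth.pos.trans_le hγ)
  have hw := pow_pos (magnetization_pos (eps_pos β) hth.pos) 2
  set K₁ := (curveEnergy β 0 th - curveEnergy β 0 0 + 1) / (β * magnetization (eps β) th ^ 2)
  have hneg : tailGap β th K₁ < 0 := by
    have := tailGap_le_sub hth (K := K₁) le_rfl
    rw [curveEnergy_eq_add (K := 0) K₁ th, curveEnergy_eq_add (K := 0) K₁ 0,
      magnetization_zero] at this
    have hK₁ : β * K₁ * magnetization (eps β) th ^ 2
        = curveEnergy β 0 th - curveEnergy β 0 0 + 1 := by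
      have := (magnetization_pos (eps_pos β) hth.pos).ne'
      simp only [K₁]
      field_simp
    nlinarith
  have hgap : StrictAnti (tailGap β th) := tailGap_strictAnti hβ hth
  obtain ⟨Kc, hKc, hzero⟩ := intermediate_value_Icc'
    (hgap.lt_iff_gt.1 (hneg.trans hpos)).le
    (tailGap_lipschitzWith hβ.le hth).continuous.continuousOn ⟨hneg.le, hpos.le⟩
  exact ⟨Kc, hK₀.trans_le hKc.1, hzero⟩

end TailGap

section Classification

variable {β K th : ℝ} (hβ : 0 < β) (hK : 0 < K) (hth : IsTurningPoint (chi (eps β)) th)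

include hβ hK hth

lemma canonE_eq_of_tailGap_pos (h : 0 < tailGap β th K) : canonE β K = {rhoBeta β} := by
  obtain ⟨γ, hγ, hmin, hlt⟩ := exists_isMinOn_curveEnergy_Ici hth K
  rw [tailGap_eq hγ hmin, sub_pos] at h
  rw [canonE_eq_image_tilt (by positivity), setOf_forall_le_of_even_of_lt (curveEnergy_neg K)
    (hth.pos.trans_le hγ) hlt h, image_singleton, tilt_zero]

lemma canonE_eq_of_tailGap_eq_zero (h : tailGap β th K = 0) :
    ∃ γ, 0 < γ ∧ canonE β K = {rhoBeta β, tilt β γ, tilt β (-γ)} := by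
  obtain ⟨γ, hγ, hmin, hlt⟩ := exists_isMinOn_curveEnergy_Ici hth K
  rw [tailGap_eq hγ hmin, sub_eq_zero] at h
  refine ⟨γ, hth.pos.trans_le hγ, ?_⟩
  rw [canonE_eq_image_tilt (by positivity), setOf_forall_le_of_even_of_eq (curveEnergy_neg K)
    (hth.pos.trans_le hγ) hlt h.symm, image_insert_eq, image_insert_eq, image_singleton, tilt_zero]

lemma canonE_eq_of_tailGap_neg (h : tailGap β th K < 0) :
    ∃ γ, 0 < γ ∧ canonE β K = {tilt β γ, tilt β (-γ)} := by
  obtain ⟨γ, hγ, hmin, hlt⟩ := exists_isMinOn_curveEnergy_Ici hth K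
  rw [tailGap_eq hγ hmin, sub_neg] at h
  refine ⟨γ, hth.pos.trans_le hγ, ?_⟩
  rw [canonE_eq_image_tilt (by positivity), setOf_forall_le_of_even_of_gt (curveEnergy_neg K)
    (hth.pos.trans_le hγ) hlt h, image_insert_eq, image_singleton]

end Classification

/-- Fix `β > log 4`.  There is a critical value `K_c^{(1)}(β) > 0` such
that: (i) for `0 < K < K_c^{(1)}(β)`, `E_{β,K} = {ρ_β}`; (ii) for `K = K_c^{(1)}(β)`,
`E_{β,K} = {ρ_β, ν⁺, ν⁻}` with `ν⁺ ≠ ν⁻`, both different from `ρ_β`; (iii) for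
`K > K_c^{(1)}(β)`, `E_{β,K} = {ν⁺, ν⁻}` likewise; and in cases (ii), (iii) `ν⁻`
is obtained from `ν⁺` by interchanging the components at `−1` and at `1`. -/
theorem canonE_structure_first_order (β : ℝ) (hβ : Real.log 4 < β) :
    ∃ Kc1 : ℝ, 0 < Kc1 ∧
      (∀ K : ℝ, 0 < K → K < Kc1 → canonE β K = {rhoBeta β}) ∧
      (∃ νp νm : ℝ × ℝ × ℝ,
        νp ≠ νm ∧ νp ≠ rhoBeta β ∧ νm ≠ rhoBeta β ∧
        canonE β Kc1 = {rhoBeta β, νp, νm} ∧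
        νm.1 = νp.2.2 ∧ νm.2.1 = νp.2.1 ∧ νm.2.2 = νp.1) ∧
      (∀ K : ℝ, Kc1 < K →
        ∃ νp νm : ℝ × ℝ × ℝ,
          νp ≠ νm ∧ νp ≠ rhoBeta β ∧ νm ≠ rhoBeta β ∧
          canonE β K = {νp, νm} ∧
          νm.1 = νp.2.2 ∧ νm.2.1 = νp.2.1 ∧ νm.2.2 = νp.1) := by
  have hβ0 : 0 < β := (log_pos (by norm_num)).trans hβ
  obtain ⟨th, hth⟩ := exists_isTurningPoint_chi (eps_pos β) (eps_lt_half hβ)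
  obtain ⟨Kc, hKc, hzero⟩ := exists_tailGap_eq_zero hβ0 hth
  have hgap : StrictAnti (tailGap β th) := tailGap_strictAnti hβ0 hth
  refine ⟨Kc, hKc, fun K hK hlt => ?_, ?_, fun K hK => ?_⟩
  · exact canonE_eq_of_tailGap_pos hβ0 hK hth (hzero ▸ hgap hlt)
  · obtain ⟨γ, hγ, hE⟩ := canonE_eq_of_tailGap_eq_zero hβ0 hKc hth hzero
    obtain ⟨h1, h2, h3⟩ := tilt_ne_of_pos β hγ
    exact ⟨tilt β γ, tilt β (-γ), h1, h2, h3, hE, by simp [tilt_neg]⟩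
  · obtain ⟨γ, hγ, hE⟩ :=
      canonE_eq_of_tailGap_neg hβ0 (hKc.trans hK) hth (hzero ▸ hgap hK)
    obtain ⟨h1, h2, h3⟩ := tilt_ne_of_pos β hγ
    exact ⟨tilt β γ, tilt β (-γ), h1, h2, h3, hE, by simp [tilt_neg]⟩
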